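/- arXiv:1207.5518 — 2 statements merged into one kernel-verified Lean document; each statement's English description precedes it below -/
import Mathlib

section
/- Let q ∈ [0,1], let B be a binomial-type sum of N = k'·T independent Bernoulli(q) trials and let G = k' + (a binomial sum of k independent Bernoulli(q) trials), where k > k'·T. Then for all x ≤ 1, with probability at least 1 − 4·exp(−2x²·k'·T), one has B ≤ (2x + k'/k)·T·G. -/
/-!
Hoeffding's inequality bounds the probability of each of the events `(q + x)·k'T ≤ B` and
`S ≤ (q - x)·k` by `exp (-2x²k'T)` (for the second, because `k'T ≤ k`), where `S` is the
random part of `G`. Outside both events, `(q - x)·k'T ≤ (k'T / k)·S` whatever the sign of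
`q - x`, hence `B ≤ 2x·k'T + (k'T / k)·S ≤ (2x + k'/k)·T·(k' + S)`.
-/

open MeasureTheory ProbabilityTheory Real

lemma neg_sq_div_card_div_four (x : ℝ) (n : ℕ) :
    -(x * n) ^ 2 / (2 * (n / 4 : NNReal)) = -2 * x ^ 2 * n := by
  rcases Nat.eq_zero_or_pos n with rfl | hn
  · simp
  · push_cast
    field_simp
    ring

section Hoeffding

variable {Ω ι : Type*} {mΩ : MeasurableSpace Ω} {μ : Measure Ω} [IsProbabilityMeasure μ]
  [Fintype ι] {X : ι → Ω → ℝ} {q : ℝ}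

lemma hasSubgaussianMGF_sum_sub_of_mem_unitInterval (hindep : iIndepFun X μ)
    (hmeas : ∀ i, AEMeasurable (X i) μ) (hX : ∀ i, ∀ᵐ ω ∂μ, X i ω ∈ Set.Icc 0 1)
    (hmean : ∀ i, μ[X i] = q) :
    HasSubgaussianMGF (fun ω ↦ ∑ i, (X i ω - q)) (Fintype.card ι / 4) μ := by
  have hcentered : iIndepFun (fun i ω ↦ X i ω - q) μ :=
    hindep.comp (fun _ y ↦ y - q) fun _ ↦ measurable_id.sub_const q
  have hsub : ∀ i, HasSubgaussianMGF (fun ω ↦ X i ω - q) (1 / 4) μ := fun i ↦ by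
    simpa [hmean i, div_pow, show (2 : NNReal) ^ 2 = 4 by norm_num] using
      hasSubgaussianMGF_of_mem_Icc (hmeas i) (hX i)
  simpa [div_eq_mul_one_div (Fintype.card ι : NNReal)] using
    HasSubgaussianMGF.sum_of_iIndepFun hcentered (s := Finset.univ) fun i _ ↦ hsub i

lemma measureReal_sum_ge_le_of_mem_unitInterval (hindep : iIndepFun X μ)
    (hmeas : ∀ i, AEMeasurable (X i) μ) (hX : ∀ i, ∀ᵐ ω ∂μ, X i ω ∈ Set.Icc 0 1)
    (hmean : ∀ i, μ[X i] = q) {x : ℝ} (hx : 0 ≤ x) :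
    μ.real {ω | (q + x) * Fintype.card ι ≤ ∑ i, X i ω} ≤ exp (-2 * x ^ 2 * Fintype.card ι) := by
  have h := (hasSubgaussianMGF_sum_sub_of_mem_unitInterval hindep hmeas hX hmean).measure_ge_le
    (ε := x * Fintype.card ι) (by positivity)
  rw [neg_sq_div_card_div_four] at h
  convert h using 4 with ω
  simp only [Finset.sum_sub_distrib, Finset.sum_const, Finset.card_univ, nsmul_eq_mul]
  constructor <;> intro h <;> linarith

lemma measureReal_sum_le_le_of_mem_unitInterval (hindep : iIndepFun X μ)
    (hmeas : ∀ i, AEMeasurable (X i) μ) (hX : ∀ i, ∀ᵐ ω ∂μ, X i ω ∈ Set.Icc 0 1)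
    (hmean : ∀ i, μ[X i] = q) {x : ℝ} (hx : 0 ≤ x) :
    μ.real {ω | ∑ i, X i ω ≤ (q - x) * Fintype.card ι} ≤ exp (-2 * x ^ 2 * Fintype.card ι) := by
  have h := (hasSubgaussianMGF_sum_sub_of_mem_unitInterval hindep hmeas hX hmean).neg
    |>.measure_ge_le (ε := x * Fintype.card ι) (by positivity)
  rw [neg_sq_div_card_div_four] at h
  convert h using 4 with ω
  simp only [Pi.neg_apply, Finset.sum_sub_distrib, Finset.sum_const, Finset.card_univ,
    nsmul_eq_mul]
  constructor <;> intro h <;> linarith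

end Hoeffding

lemma integral_eq_of_forall_eq_zero_or_eq_one {Ω : Type*} {mΩ : MeasurableSpace Ω}
    {μ : Measure Ω} {X : Ω → ℝ} {q : ℝ} (hq : 0 ≤ q) (hmeas : Measurable X)
    (hX : ∀ ω, X ω = 0 ∨ X ω = 1) (hprob : μ {ω | X ω = 1} = ENNReal.ofReal q) :
    μ[X] = q := by
  have hind : X = {ω | X ω = 1}.indicator 1 := by
    funext ω
    rcases hX ω with h | h <;> simp [h]
  rw [hind, integral_indicator_one (measurableSet_eq_fun hmeas measurable_const),
    measureReal_def, hprob, ENNReal.toReal_ofReal hq]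

lemma one_sub_ofReal_add_le_measure {Ω : Type*} {mΩ : MeasurableSpace Ω}
    {μ : Measure Ω} [IsProbabilityMeasure μ] {A D₁ D₂ : Set Ω} (hA : D₁ᶜ ∩ D₂ᶜ ⊆ A) {a₁ a₂ : ℝ}
    (h₁ : μ.real D₁ ≤ a₁) (h₂ : μ.real D₂ ≤ a₂) :
    1 - ENNReal.ofReal (a₁ + a₂) ≤ μ A := by
  have hcompl : μ Aᶜ ≤ ENNReal.ofReal (a₁ + a₂) := calc
    μ Aᶜ ≤ μ (D₁ ∪ D₂) := measure_mono <| Set.compl_subset_comm.2 <| by rwa [Set.compl_union]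
    _ ≤ μ D₁ + μ D₂ := measure_union_le D₁ D₂
    _ ≤ ENNReal.ofReal a₁ + ENNReal.ofReal a₂ := by
      rw [← ofReal_measureReal, ← ofReal_measureReal]
      gcongr
    _ = ENNReal.ofReal (a₁ + a₂) :=
      (ENNReal.ofReal_add (measureReal_nonneg.trans h₁) (measureReal_nonneg.trans h₂)).symm
  calc 1 - ENNReal.ofReal (a₁ + a₂) ≤ 1 - μ Aᶜ := tsub_le_tsub_left hcompl 1
    _ ≤ μ A := by
      rw [tsub_le_iff_right, ← measure_univ (μ := μ)]
      exact measure_univ_le_add_compl A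

lemma le_two_mul_add_div_mul_mul_add_of_le_of_le {q x K K' T S B : ℝ} (hx : 0 ≤ x)
    (hK : 0 < K) (hK' : 0 ≤ K') (hT : 0 ≤ T) (hS : 0 ≤ S) (hB : B ≤ (q + x) * (K' * T))
    (hSK : (q - x) * K ≤ S) :
    B ≤ (2 * x + K' / K) * T * (K' + S) := by
  have hshift : (q - x) * (K' * T) ≤ K' / K * T * S := calc
    (q - x) * (K' * T) = (q - x) * K * (K' * T / K) := by field_simp
    _ ≤ S * (K' * T / K) := by gcongr
    _ = K' / K * T * S := by ring
  have : 0 ≤ 2 * x * T * S + K' / K * T * K' := by positivity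
  linarith

theorem stmt6_general {Ω : Type*} [MeasureSpace Ω] [IsProbabilityMeasure (ℙ : Measure Ω)]
    (k' T k : ℕ) (hk : k' * T < k)
    (q : ℝ) (hq : q ∈ Set.Icc (0 : ℝ) 1)
    (Z : (Fin (k' * T) ⊕ Fin k) → Ω → ℝ)
    (hmeas : ∀ i, Measurable (Z i))
    (hindep : iIndepFun Z ℙ)
    (hBern : ∀ i ω, Z i ω = 0 ∨ Z i ω = 1)
    (hprob : ∀ i, ℙ {ω | Z i ω = 1} = ENNReal.ofReal q)
    (x : ℝ) (hx0 : 0 < x) :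
    ℙ {ω | ∑ i : Fin (k' * T), Z (Sum.inl i) ω
            ≤ (2 * x + (k' : ℝ) / k) * T * ((k' : ℝ) + ∑ j : Fin k, Z (Sum.inr j) ω)}
      ≥ 1 - ENNReal.ofReal (4 * Real.exp (-2 * x ^ 2 * (k' * T : ℕ))) := by
  have hIcc : ∀ i ω, Z i ω ∈ Set.Icc 0 1 := fun i ω ↦ by
    rcases hBern i ω with h | h <;> simp [h]
  have hmean : ∀ i, ∫ ω, Z i ω = q := fun i ↦
    integral_eq_of_forall_eq_zero_or_eq_one hq.1 (hmeas i) (hBern i) (hprob i)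
  have hupper := measureReal_sum_ge_le_of_mem_unitInterval (hindep.precomp Sum.inl_injective)
    (fun _ ↦ (hmeas _).aemeasurable) (fun _ ↦ ae_of_all _ (hIcc _)) (fun _ ↦ hmean _) hx0.le
  have hlower := measureReal_sum_le_le_of_mem_unitInterval (hindep.precomp Sum.inr_injective)
    (fun _ ↦ (hmeas _).aemeasurable) (fun _ ↦ ae_of_all _ (hIcc _)) (fun _ ↦ hmean _) hx0.le
  simp only [Fintype.card_fin] at hupper hlower
  have hexp : exp (-2 * x ^ 2 * k) ≤ exp (-2 * x ^ 2 * (k' * T : ℕ)) :=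
    exp_le_exp.2 <| mul_le_mul_of_nonpos_left (by exact_mod_cast hk.le) (by nlinarith)
  set ε := exp (-2 * x ^ 2 * (k' * T : ℕ))
  have hε : 0 < ε := exp_pos _
  calc 1 - ENNReal.ofReal (4 * ε) ≤ 1 - ENNReal.ofReal (ε + ε) :=
        tsub_le_tsub_left (ENNReal.ofReal_le_ofReal (by linarith)) 1
    _ ≤ _ := one_sub_ofReal_add_le_measure ?_ hupper (hlower.trans hexp)
  rintro ω ⟨hB, hS⟩
  simp only [Set.mem_compl_iff, Set.mem_ofPred_eq, not_le, Nat.cast_mul] at hB hS ⊢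
  exact le_two_mul_add_div_mul_mul_add_of_le_of_le hx0.le
    (by exact_mod_cast (Nat.zero_le _).trans_lt hk) (Nat.cast_nonneg _) (Nat.cast_nonneg _)
    (Finset.sum_nonneg fun j _ ↦ (hIcc _ ω).1) hB.le hS.le

/-- Let `q ∈ [0,1]`, let `B` be the sum of `N = k'·T` independent Bernoulli(q) indicators
and `G = k' + (sum of k independent Bernoulli(q) indicators)`, all jointly independent,
where `k > k'·T`. Then for all `0 < x ≤ 1`, with probability at least
`1 − 4·exp(−2 x² k' T)`, one has `B ≤ (2x + k'/k)·T·G`. -/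
theorem stmt6 {Ω : Type*} [MeasureSpace Ω] [IsProbabilityMeasure (ℙ : Measure Ω)]
    (k' T k : ℕ) (hk' : 0 < k') (hT : 0 < T) (hk : k' * T < k)
    (q : ℝ) (hq : q ∈ Set.Icc (0 : ℝ) 1)
    (Z : (Fin (k' * T) ⊕ Fin k) → Ω → ℝ)
    (hmeas : ∀ i, Measurable (Z i))
    (hindep : iIndepFun Z ℙ)
    (hBern : ∀ i ω, Z i ω = 0 ∨ Z i ω = 1)
    (hprob : ∀ i, ℙ {ω | Z i ω = 1} = ENNReal.ofReal q)
    (x : ℝ) (hx0 : 0 < x) (hx1 : x ≤ 1) :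
    ℙ {ω | ∑ i : Fin (k' * T), Z (Sum.inl i) ω
            ≤ (2 * x + (k' : ℝ) / k) * T * ((k' : ℝ) + ∑ j : Fin k, Z (Sum.inr j) ω)}
      ≥ 1 - ENNReal.ofReal (4 * Real.exp (-2 * x ^ 2 * (k' * T : ℕ))) :=
  stmt6_general k' T k hk q hq Z hmeas hindep hBern hprob x hx0
end

section
/- Suppose bidders are independent: for each bidder i and all types B ∈ T_i, the conditional distribution D_{−i}(B) over the other bidders' types equals D_{−i}. Then for any second-order weight vector w with coordinates w_{ij}(A,B), defining w'_{ij}(A) = Σ_{B ∈ T_i} w_{ij}(A,B), the weights used by the second-order VCG rule on any profile v, f_{ij}(v) = Σ_{B∈T_i} w_{ij}(v_i,B)·Pr[v_{−i} ← D_{−i}(B)], are proportional (with a common positive factor Pr[v ← D] per profile) to the weights f'_{ij}(v) = w'_{ij}(v_i)/Pr[t_i = v_i] used by the virtual VCG rule with weights w'. Consequently the two rules choose the same maximum-weight allocation on every profile with Pr[v ← D] > 0. -/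
/-! Under independence `Pr[v₋ᵢ] = Pr[v] / Pr[tᵢ = vᵢ]` (here `∏ i' ≠ i, Di i' (v i')`), so every
second-order weight on the profile `v` is `Pr[v]` times the corresponding virtual weight, and
multiplying all weights by the same positive constant does not change which allocations are
maximal. -/

open Finset

theorem mul_prod_erase_eq_prod_mul_div {ι K : Type*} [Fintype ι] [DecidableEq ι] [Field K]
    (p : ι → K) {i : ι} (hi : p i ≠ 0) (c : K) :
    c * ∏ i' ∈ univ.erase i, p i' = (∏ i', p i') * (c / p i) := by
  rw [← mul_prod_erase univ p (mem_univ i)]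
  field_simp

theorem forall_mem_sum_le_sum_iff_of_eq_mul {β K : Type*} [Semiring K] [LinearOrder K]
    [IsStrictOrderedRing K] {f g : β → K} {c : K} (hc : 0 < c) (hfg : ∀ b, f b = c * g b)
    (F : Finset (Finset β)) (S : Finset β) :
    (∀ S' ∈ F, ∑ b ∈ S', f b ≤ ∑ b ∈ S, f b) ↔ ∀ S' ∈ F, ∑ b ∈ S', g b ≤ ∑ b ∈ S, g b := by
  simp only [hfg, ← mul_sum, mul_le_mul_iff_right₀ hc]

/-- For independent bidders, the weights of the second-order VCG rule with weights `w`
are, on every profile of positive probability, a common positive multiple (`Pr[v ← D]`)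
of the weights of the virtual VCG rule with weights `w'_{ij}(A) = ∑_B w_{ij}(A,B)`;
consequently the two rules select the same maximum-weight feasible allocations. -/
theorem stmt15 (m n : ℕ) (T : Fin m → Type) [∀ i, Fintype (T i)]
    (Di : ∀ i : Fin m, T i → ℝ)
    (F : Finset (Finset (Fin m × Fin n)))
    (w : ∀ i : Fin m, Fin n → T i → T i → ℝ)
    (v : ∀ i, T i) (hv : ∀ i, 0 < Di i (v i)) :
    (∀ (i : Fin m) (j : Fin n),
        (∑ B : T i, w i j (v i) B * ∏ i' ∈ univ.erase i, Di i' (v i')) =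
          (∏ i', Di i' (v i')) *
            ((∑ B : T i, w i j (v i) B) / Di i (v i))) ∧
      ∀ S ∈ F,
        ((∀ S' ∈ F,
            (∑ ij ∈ S', ∑ B : T ij.1, w ij.1 ij.2 (v ij.1) B *
                ∏ i' ∈ univ.erase ij.1, Di i' (v i')) ≤
              ∑ ij ∈ S, ∑ B : T ij.1, w ij.1 ij.2 (v ij.1) B *
                ∏ i' ∈ univ.erase ij.1, Di i' (v i')) ↔
          (∀ S' ∈ F,
            (∑ ij ∈ S', (∑ B : T ij.1, w ij.1 ij.2 (v ij.1) B) / Di ij.1 (v ij.1)) ≤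
              ∑ ij ∈ S, (∑ B : T ij.1, w ij.1 ij.2 (v ij.1) B) / Di ij.1 (v ij.1))) := by
  have hweight : ∀ (i : Fin m) (j : Fin n),
      (∑ B : T i, w i j (v i) B * ∏ i' ∈ univ.erase i, Di i' (v i')) =
        (∏ i', Di i' (v i')) * ((∑ B : T i, w i j (v i) B) / Di i (v i)) := fun i _ => by
    rw [← sum_mul, mul_prod_erase_eq_prod_mul_div (fun i' => Di i' (v i')) (hv i).ne']
  refine ⟨hweight, fun S _ => ?_⟩
  exact forall_mem_sum_le_sum_iff_of_eq_mul (prod_pos fun i _ => hv i)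
    (fun ij => hweight ij.1 ij.2) F S
end
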